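/- For a finite connected multigraph G with at least 3 vertices, the quotient of 𝔐(G) by the relation ℛ (identifying vertices with equal links that are not joined by an edge) is isomorphic to 𝔐(sG), where sG is the simplification of G obtained by identifying parallel edges. The isomorphism sends the class of (v,e) to (v, ē), ē being the image of e in sG. -/

import Mathlib

/-- A multigraph: edges carry unordered pairs of distinct endpoints (no loops). -/
structure Multigraph (V E : Type*) where
  ends : E → Sym2 V
  not_isDiag : ∀ e, ¬ (ends e).IsDiag

/-- The simplification `sG` of a multigraph `G`: the simple graph on `V_G` in which
`u` and `w` are adjacent iff `G` has at least one edge between them. -/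
def Multigraph.toSimple {V E : Type*} (G : Multigraph V E) : SimpleGraph V where
  Adj u w := u ≠ w ∧ ∃ e, G.ends e = s(u, w)
  symm := by
    constructor
    rintro u w ⟨h, e, he⟩
    exact ⟨h.symm, e, by rw [he, Sym2.eq_swap]⟩
  loopless := ⟨fun u h => h.1 rfl⟩

/-- A multigraph is connected iff its underlying simple graph is. -/
def Multigraph.Connected {V E : Type*} (G : Multigraph V E) : Prop :=
  G.toSimple.Connected

/-- Simplices of the discrete Morse complex `𝔐(G)` of a multigraph `G`. -/
def IsMorseSimplexM {V E : Type*} (G : Multigraph V E) (S : Finset (V × E)) : Prop :=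
  (∀ p ∈ S, p.1 ∈ G.ends p.2) ∧
  (∀ p ∈ S, ∀ q ∈ S, p.1 = q.1 → p = q) ∧
  (∀ p ∈ S, ∀ q ∈ S, p.2 = q.2 → p = q) ∧
  (∀ v : V, ¬ Relation.TransGen
    (fun a b => ∃ e, (a, e) ∈ S ∧ G.ends e = s(a, b)) v v)

/-- The discrete Morse complex `𝔐(G)` of a multigraph, as a family of finite sets. -/
def MCpxM {V E : Type*} (G : Multigraph V E) : Set (Finset (V × E)) :=
  {S | IsMorseSimplexM G S}

/-- Simplices of the discrete Morse complex `𝔐(H)` of a simple graph `H`. -/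
def IsMorseSimplex {V : Type*} (H : SimpleGraph V) (S : Finset (V × V)) : Prop :=
  (∀ p ∈ S, H.Adj p.1 p.2) ∧
  (∀ p ∈ S, ∀ q ∈ S, p.1 = q.1 → p = q) ∧
  (∀ v : V, ¬ Relation.TransGen (fun a b => (a, b) ∈ S) v v)

/-- The link of a vertex `v` in a set-complex `K`. -/
def lkv {A : Type*} [DecidableEq A] (K : Set (Finset A)) (v : A) : Set (Finset A) :=
  {t | v ∉ t ∧ insert v t ∈ K}

/-- The relation `ℛ`: `v ℛ w` iff `v = w`, or `{v,w} ∉ K` and `lk(v,K) = lk(w,K)`. -/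
def Rrel {A : Type*} [DecidableEq A] (K : Set (Finset A)) (v w : A) : Prop :=
  v = w ∨ (({v, w} : Finset A) ∉ K ∧ lkv K v = lkv K w)

/-- The quotient complex `K̃` on the `ℛ`-classes. -/
def qfaces {A : Type*} [DecidableEq A] (K : Set (Finset A)) :
    Set (Finset (Quot (Rrel K))) :=
  {t | ∃ s ∈ K, ∀ x, x ∈ t ↔ ∃ v ∈ s, Quot.mk (Rrel K) v = x}


/-!
A simplex of `𝔐(G)` is a set of arrows `(v, e)`, at most one per tail and per edge, without
directed cycles. Forgetting which of several parallel edges carries an arrow turns it into a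
simplex of `𝔐(sG)`, and every simplex of `𝔐(sG)` lifts by choosing an edge for each arrow; so
everything reduces to showing that `ℛ` identifies exactly the arrows with the same tail along
parallel edges. Parallel arrows have the same link, because a simplex containing one of them
cannot use the other edge without a 2-cycle. Conversely, let `(v, e) ℛ (w, f)`. If `v = w` and
`f = vb` is not parallel to `e`, then `{(b, f)}` separates the links. If `v ≠ w`, the non-simplex
`{(v, e), (w, f)}` must be a 2-cycle, so `e` and `f` both join `v` and `w`; an edge from `{v, w}`
to a third vertex, which exists since `G` is connected with at least three vertices, then lies
in the link of one of them only.
-/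

theorem Relation.not_transGen_self_of_rank {α : Type*} {r : α → α → Prop} (φ : α → ℕ)
    (h : ∀ a b, r a b → φ a < φ b) (a : α) : ¬ Relation.TransGen r a a := fun hr =>
  lt_irrefl (φ a) (by simpa [Relation.transGen_eq_self] using Relation.TransGen.lift φ h a a hr)

theorem Rrel.symm {A : Type*} [DecidableEq A] {K : Set (Finset A)} {a b : A}
    (h : Rrel K a b) : Rrel K b a := by
  rcases h with rfl | ⟨hpair, hlk⟩
  · exact Or.inl rfl
  · exact Or.inr ⟨by rwa [Finset.pair_comm], hlk.symm⟩

theorem mem_qfaces_iff {A B : Type*} [DecidableEq A] [DecidableEq B] {K : Set (Finset A)}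
    {L : Set (Finset B)} {g : Quot (Rrel K) → B}
    (hK : ∀ s ∈ K, s.image (g ∘ Quot.mk _) ∈ L)
    (hL : ∀ u ∈ L, ∃ s ∈ K, s.image (g ∘ Quot.mk _) = u)
    (hinj : ∀ u ∈ L, Set.InjOn g (g ⁻¹' u)) (t : Finset (Quot (Rrel K))) :
    t ∈ qfaces K ↔ ∃ u ∈ L, ∀ p, p ∈ u ↔ ∃ x ∈ t, g x = p := by
  constructor
  · rintro ⟨s, hs, hst⟩
    refine ⟨_, hK s hs, fun p => ?_⟩
    simp only [Finset.mem_image, Function.comp_apply, hst]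
    constructor
    · rintro ⟨q, hq, rfl⟩
      exact ⟨_, ⟨q, hq, rfl⟩, rfl⟩
    · rintro ⟨_, ⟨q, hq, rfl⟩, rfl⟩
      exact ⟨q, hq, rfl⟩
  · rintro ⟨u, hu, hut⟩
    obtain ⟨s, hs, rfl⟩ := hL u hu
    have hgq : ∀ q ∈ s, g (Quot.mk _ q) ∈ s.image (g ∘ Quot.mk _) :=
      fun q hq => Finset.mem_image_of_mem _ hq
    refine ⟨s, hs, fun x => ⟨fun hx => ?_, ?_⟩⟩
    · have hgx := (hut (g x)).mpr ⟨x, hx, rfl⟩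
      obtain ⟨q, hq, hqx⟩ := Finset.mem_image.mp hgx
      exact ⟨q, hq, hinj _ hu (hgq q hq) hgx hqx⟩
    · rintro ⟨q, hq, rfl⟩
      obtain ⟨y, hy, hyq⟩ := (hut _).mp (hgq q hq)
      rwa [← hinj _ hu (hyq.symm ▸ hgq q hq : g y ∈ _) (hgq q hq) hyq]

theorem SimpleGraph.Connected.exists_adj_of_mem_of_notMem {V : Type*} {H : SimpleGraph V}
    (hH : H.Connected) {S : Set V} {x y : V} (hx : x ∈ S) (hy : y ∉ S) :
    ∃ a ∈ S, ∃ b ∉ S, H.Adj a b := by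
  obtain ⟨d, -, hd, hd'⟩ := (hH.preconnected x y).some.exists_boundary_dart S hx hy
  exact ⟨_, hd, _, hd', d.adj⟩

theorem Fintype.exists_ne_ne_of_three_le_card {V : Type*} [Fintype V] [DecidableEq V]
    (h3 : 3 ≤ Fintype.card V) (v w : V) : ∃ y, y ≠ v ∧ y ≠ w := by
  have hlt : ({v, w} : Finset V).card < (Finset.univ : Finset V).card := by
    rw [Finset.card_univ]
    exact (Finset.card_le_two).trans_lt (by omega)
  obtain ⟨y, -, hy⟩ := Finset.exists_mem_notMem_of_card_lt_card hlt
  simp only [Finset.mem_insert, Finset.mem_singleton, not_or] at hy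
  exact ⟨y, hy⟩

namespace Multigraph

variable {V E : Type*} (G : Multigraph V E)

theorem toSimple_adj_iff {a b : V} : G.toSimple.Adj a b ↔ a ≠ b ∧ ∃ e, G.ends e = s(a, b) :=
  Iff.rfl

variable {G}

theorem ne_of_ends_eq {e : E} {a b : V} (h : G.ends e = s(a, b)) : a ≠ b := fun hab =>
  G.not_isDiag e (by rw [h, hab]; exact Sym2.mk_isDiag_iff.mpr rfl)

variable (G)

/-- The relation whose cycles `IsMorseSimplexM` excludes. -/
def morseRel (S : Finset (V × E)) (v w : V) : Prop :=
  ∃ e, (v, e) ∈ S ∧ G.ends e = s(v, w)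

open Classical in
/-- Pairs `(v, e)` with `v ∉ e` are not vertices of `𝔐(G)`; having empty links they form a
single `ℛ`-class, which is sent to a fixed diagonal pair. -/
noncomputable def orient [Nonempty V] (p : V × E) : V × V :=
  if h : p.1 ∈ G.ends p.2 then (p.1, Sym2.Mem.other h)
  else (Classical.arbitrary V, Classical.arbitrary V)

variable {G} [Nonempty V]

theorem orient_of_notMem {p : V × E} (hp : p.1 ∉ G.ends p.2) :
    G.orient p = (Classical.arbitrary V, Classical.arbitrary V) :=
  dif_neg hp

theorem orient_eq_iff {p : V × E} (hp : p.1 ∈ G.ends p.2) {a b : V} :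
    G.orient p = (a, b) ↔ p.1 = a ∧ G.ends p.2 = s(a, b) := by
  rw [orient, dif_pos hp, Prod.mk.injEq]
  constructor
  · rintro ⟨rfl, rfl⟩
    exact ⟨rfl, (Sym2.other_spec hp).symm⟩
  · rintro ⟨rfl, hab⟩
    exact ⟨rfl, Sym2.congr_right.mp ((Sym2.other_spec hp).trans hab)⟩

theorem orient_of_ends_eq {v w : V} {e : E} (h : G.ends e = s(v, w)) :
    G.orient (v, e) = (v, w) :=
  (orient_eq_iff (by rw [h]; exact Sym2.mem_mk_left v w)).mpr ⟨rfl, h⟩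

theorem orient_spec {p : V × E} (hp : p.1 ∈ G.ends p.2) :
    (G.orient p).1 = p.1 ∧ G.ends p.2 = s((G.orient p).1, (G.orient p).2) := by
  obtain ⟨h1, h2⟩ := (orient_eq_iff hp).mp rfl
  exact ⟨h1.symm, h2⟩

theorem orient_eq_orient_iff {p q : V × E} (hp : p.1 ∈ G.ends p.2) (hq : q.1 ∈ G.ends q.2) :
    G.orient p = G.orient q ↔ p.1 = q.1 ∧ G.ends p.2 = G.ends q.2 := by
  obtain ⟨hq1, hq2⟩ := orient_spec hq
  rw [orient_eq_iff hp, ← hq2, hq1]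

theorem toSimple_adj_orient {p : V × E} (hp : p.1 ∈ G.ends p.2) :
    G.toSimple.Adj (G.orient p).1 (G.orient p).2 :=
  ⟨ne_of_ends_eq (orient_spec hp).2, p.2, (orient_spec hp).2⟩

theorem mem_ends_of_toSimple_adj_orient {p : V × E}
    (h : G.toSimple.Adj (G.orient p).1 (G.orient p).2) : p.1 ∈ G.ends p.2 := by
  by_contra hp
  rw [orient_of_notMem hp] at h
  exact G.toSimple.irrefl h

variable [DecidableEq V]

theorem morseRel_eq_mem_image {S : Finset (V × E)} (hS : ∀ p ∈ S, p.1 ∈ G.ends p.2) :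
    G.morseRel S = fun a b => (a, b) ∈ S.image G.orient := by
  ext a b
  rw [morseRel, Finset.mem_image]
  constructor
  · rintro ⟨e, he, hab⟩
    exact ⟨(a, e), he, orient_of_ends_eq hab⟩
  · rintro ⟨p, hp, hpab⟩
    obtain ⟨rfl, hab⟩ := (orient_eq_iff (hS p hp)).mp hpab
    exact ⟨p.2, hp, hab⟩

end Multigraph

namespace IsMorseSimplexM

variable {V E : Type*} {G : Multigraph V E}

theorem singleton {v : V} {e : E} (h : v ∈ G.ends e) : IsMorseSimplexM G {(v, e)} := by
  classical
  obtain ⟨a, ha⟩ := Sym2.mem_iff_exists.mp h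
  have hva := Multigraph.ne_of_ends_eq ha
  refine ⟨by simpa using h, by simp, by simp, ?_⟩
  refine Relation.not_transGen_self_of_rank (fun x => if x = v then 0 else 1) ?_
  rintro x y ⟨d, hd, hxy⟩
  obtain ⟨rfl, rfl⟩ := Prod.mk.inj (Finset.mem_singleton.mp hd)
  obtain rfl := Sym2.congr_right.mp (hxy.symm.trans ha)
  simp [hva.symm]

/-- Two arrows can only form a 2-cycle, which `a ≠ w` excludes. -/
theorem pair [DecidableEq V] [DecidableEq E] {v w a b : V} {e f : E} (hvw : v ≠ w)
    (hef : e ≠ f) (he : G.ends e = s(v, a)) (hf : G.ends f = s(w, b)) (haw : a ≠ w) :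
    IsMorseSimplexM G {(v, e), (w, f)} := by
  have hva := Multigraph.ne_of_ends_eq he
  have hwb := Multigraph.ne_of_ends_eq hf
  refine ⟨?_, ?_, ?_, ?_⟩
  · simp [he, hf]
  · simp [hvw, hvw.symm]
  · simp [hef, hef.symm]
  refine Relation.not_transGen_self_of_rank
    (fun x => if x = w then 0 else if x = v then 1 else 2) ?_
  rintro x y ⟨d, hd, hxy⟩
  simp only [Finset.mem_insert, Finset.mem_singleton, Prod.mk.injEq] at hd
  rcases hd with ⟨rfl, rfl⟩ | ⟨rfl, rfl⟩
  · obtain rfl := Sym2.congr_right.mp (hxy.symm.trans he)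
    simp [hvw, haw, hva.symm]
  · obtain rfl := Sym2.congr_right.mp (hxy.symm.trans hf)
    by_cases hyv : y = v <;> simp [hyv, hwb.symm, hvw]

theorem eq_of_ends_eq {S : Finset (V × E)} (hS : IsMorseSimplexM G S) {p q : V × E}
    (hp : p ∈ S) (hq : q ∈ S) (h : G.ends p.2 = G.ends q.2) : p = q := by
  by_contra hpq
  have hne : p.1 ≠ q.1 := fun h1 => hpq (hS.2.1 p hp q hq h1)
  have hends : G.ends p.2 = s(p.1, q.1) :=
    (Sym2.mem_and_mem_iff hne).mp ⟨hS.1 p hp, h ▸ hS.1 q hq⟩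
  refine hS.2.2.2 p.1 (Relation.TransGen.tail (.single ⟨p.2, hp, hends⟩) ⟨q.2, hq, ?_⟩)
  rw [← h, hends, Sym2.eq_swap]

end IsMorseSimplexM

theorem IsMorseSimplex.eq_of_sym2_eq {V : Type*} {H : SimpleGraph V} {u : Finset (V × V)}
    (hu : IsMorseSimplex H u) {p q : V × V} (hp : p ∈ u) (hq : q ∈ u)
    (h : s(p.1, p.2) = s(q.1, q.2)) : p = q := by
  rcases Sym2.eq_iff.mp h with ⟨h1, h2⟩ | ⟨h1, h2⟩
  · exact Prod.ext h1 h2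
  · have hq' : (p.2, p.1) ∈ u := by rwa [h1, h2]
    exact (hu.2.2 p.1 (Relation.TransGen.tail (.single hp) hq')).elim

namespace Multigraph

variable {V E : Type*} [DecidableEq V] {G : Multigraph V E}

theorem isMorseSimplex_image_orient [Nonempty V] {S : Finset (V × E)}
    (hS : IsMorseSimplexM G S) : IsMorseSimplex G.toSimple (S.image G.orient) := by
  refine ⟨?_, ?_, fun v => morseRel_eq_mem_image hS.1 ▸ hS.2.2.2 v⟩
  · rintro _ hp
    obtain ⟨p, hpS, rfl⟩ := Finset.mem_image.mp hp
    exact toSimple_adj_orient (hS.1 p hpS)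
  · rintro _ hp _ hq h
    obtain ⟨p, hpS, rfl⟩ := Finset.mem_image.mp hp
    obtain ⟨q, hqS, rfl⟩ := Finset.mem_image.mp hq
    rw [(orient_spec (hS.1 p hpS)).1, (orient_spec (hS.1 q hqS)).1] at h
    rw [hS.2.1 p hpS q hqS h]

variable [DecidableEq E]

theorem exists_isMorseSimplexM_image_orient_eq [Nonempty V] {u : Finset (V × V)}
    (hu : IsMorseSimplex G.toSimple u) :
    ∃ S, IsMorseSimplexM G S ∧ S.image G.orient = u := by
  choose ε hε using fun p : u => ((toSimple_adj_iff G).mp (hu.1 p p.2)).2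
  set S := u.attach.image fun p => (p.1.1, ε p)
  have hreal : ∀ q ∈ S, q.1 ∈ G.ends q.2 := by
    intro q hq
    obtain ⟨p, -, rfl⟩ := Finset.mem_image.mp hq
    rw [hε p]
    exact Sym2.mem_mk_left _ _
  have himage : S.image G.orient = u := by
    rw [Finset.image_image]
    convert Finset.attach_image_val (s := u) using 2
    ext1 p
    exact orient_of_ends_eq (hε p)
  refine ⟨S, ⟨hreal, ?_, ?_, fun v => ?_⟩, himage⟩
  · rintro _ hp _ hq h
    obtain ⟨p, -, rfl⟩ := Finset.mem_image.mp hp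
    obtain ⟨q, -, rfl⟩ := Finset.mem_image.mp hq
    rw [Subtype.ext (hu.2.1 p p.2 q q.2 h)]
  · rintro _ hp _ hq h
    obtain ⟨p, -, rfl⟩ := Finset.mem_image.mp hp
    obtain ⟨q, -, rfl⟩ := Finset.mem_image.mp hq
    have hpq : s(p.1.1, p.1.2) = s(q.1.1, q.1.2) := by rw [← hε p, ← hε q]; exact congrArg _ h
    rw [Subtype.ext (hu.eq_of_sym2_eq p.2 q.2 hpq)]
  · show ¬Relation.TransGen (G.morseRel S) v v
    rw [morseRel_eq_mem_image hreal, himage]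
    exact hu.2.2 v

theorem mem_ends_of_rrel {p q : V × E} (h : Rrel (MCpxM G) p q) (hp : p.1 ∈ G.ends p.2) :
    q.1 ∈ G.ends q.2 := by
  rcases h with rfl | ⟨-, hlk⟩
  · exact hp
  · have hp' : ∅ ∈ lkv (MCpxM G) p :=
      ⟨Finset.notMem_empty p, IsMorseSimplexM.singleton (v := p.1) (e := p.2) hp⟩
    rw [hlk] at hp'
    exact hp'.2.1 q (Finset.mem_insert_self q ∅)

theorem morseRel_insert {t : Finset (V × E)} {v a b : V} {e : E} :
    G.morseRel (insert (v, e) t) a b ↔ (a = v ∧ G.ends e = s(a, b)) ∨ G.morseRel t a b := by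
  simp only [morseRel, Finset.mem_insert, Prod.mk.injEq, or_and_right, exists_or, and_assoc,
    exists_and_left, exists_eq_left]

theorem lkv_subset_of_ends_eq {v : V} {e e' : E} (hee' : G.ends e = G.ends e') :
    lkv (MCpxM G) (v, e) ⊆ lkv (MCpxM G) (v, e') := by
  rintro t ⟨hvt, hS⟩
  have hS : IsMorseSimplexM G (insert (v, e) t) := hS
  have hfst : ∀ q ∈ t, q.1 ≠ v := fun q hq h =>
    hvt (hS.2.1 _ (Finset.mem_insert_self _ t) q (Finset.mem_insert_of_mem hq) h.symm ▸ hq)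
  -- an edge of `t` parallel to `e` would close a 2-cycle with `(v, e)`
  have hsnd : ∀ q ∈ t, G.ends q.2 ≠ G.ends e' := fun q hq h =>
    hvt (hS.eq_of_ends_eq (Finset.mem_insert_self _ t) (Finset.mem_insert_of_mem hq)
      (hee'.trans h.symm) ▸ hq)
  have hreal : ∀ p ∈ insert (v, e') t, p.1 ∈ G.ends p.2 := by
    simp only [Finset.forall_mem_insert]
    exact ⟨hee' ▸ hS.1 _ (Finset.mem_insert_self _ t),
      fun q hq => hS.1 q (Finset.mem_insert_of_mem hq)⟩
  have hve' : (v, e') ∉ t := fun h => hfst _ h rfl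
  refine ⟨hve', hreal, ?_, ?_, fun x => ?_⟩
  · show Set.InjOn Prod.fst (↑(insert (v, e') t) : Set (V × E))
    rw [Finset.coe_insert, Set.injOn_insert (by simpa using hve')]
    exact ⟨fun p hp q hq =>
      hS.2.1 p (Finset.mem_insert_of_mem hp) q (Finset.mem_insert_of_mem hq),
      fun ⟨q, hq, hqv⟩ => hfst q hq hqv⟩
  · show Set.InjOn Prod.snd (↑(insert (v, e') t) : Set (V × E))
    rw [Finset.coe_insert, Set.injOn_insert (by simpa using hve')]
    exact ⟨fun p hp q hq =>
      hS.2.2.1 p (Finset.mem_insert_of_mem hp) q (Finset.mem_insert_of_mem hq),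
      fun ⟨q, hq, hqe⟩ => hsnd q hq (congrArg G.ends hqe)⟩
  · have hrel : G.morseRel (insert (v, e') t) = G.morseRel (insert (v, e) t) := by
      ext a b
      rw [morseRel_insert, morseRel_insert, hee']
    show ¬Relation.TransGen (G.morseRel _) x x
    rw [hrel]
    exact hS.2.2.2 x

theorem rrel_of_ends_eq {v : V} {e f : E} (h : G.ends e = G.ends f) :
    Rrel (MCpxM G) (v, e) (v, f) := by
  rcases eq_or_ne e f with rfl | hef
  · exact Or.inl rfl
  refine Or.inr ⟨fun hS => ?_,
    (lkv_subset_of_ends_eq h).antisymm (lkv_subset_of_ends_eq h.symm)⟩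
  have := hS.2.1 (v, e) (Finset.mem_insert_self _ _) (v, f)
    (Finset.mem_insert_of_mem (Finset.mem_singleton_self _)) rfl
  exact hef (Prod.mk.inj this).2

theorem ends_eq_of_lkv_eq {v : V} {e f : E} (he : v ∈ G.ends e) (hf : v ∈ G.ends f)
    (hlk : lkv (MCpxM G) (v, e) = lkv (MCpxM G) (v, f)) : G.ends e = G.ends f := by
  by_contra hne
  obtain ⟨a, hea⟩ := Sym2.mem_iff_exists.mp he
  obtain ⟨b, hfb⟩ := Sym2.mem_iff_exists.mp hf
  have hvb : v ≠ b := ne_of_ends_eq hfb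
  have hab : a ≠ b := fun h => hne (by rw [hea, hfb, h])
  have hef : e ≠ f := fun h => hne (congrArg G.ends h)
  -- `b → v` along `f` is compatible with `(v, e)` but not with `(v, f)`
  have hmem : {(b, f)} ∈ lkv (MCpxM G) (v, e) :=
    ⟨by simp [hvb], IsMorseSimplexM.pair hvb hef hea (hfb.trans Sym2.eq_swap) hab⟩
  rw [hlk] at hmem
  have := hmem.2.2.2.1 (v, f) (Finset.mem_insert_self _ _) (b, f)
    (Finset.mem_insert_of_mem (Finset.mem_singleton_self _)) rfl
  exact hvb (Prod.mk.inj this).1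

theorem ends_eq_of_pair_notMem {v w : V} {e f : E} (hvw : v ≠ w) (he : v ∈ G.ends e)
    (hf : w ∈ G.ends f) (hpair : {(v, e), (w, f)} ∉ MCpxM G) :
    G.ends e = s(v, w) ∧ G.ends f = s(v, w) := by
  obtain ⟨a, hea⟩ := Sym2.mem_iff_exists.mp he
  obtain ⟨b, hfb⟩ := Sym2.mem_iff_exists.mp hf
  by_cases hef : e = f
  · subst hef
    have hends := (Sym2.mem_and_mem_iff hvw).mp ⟨he, hf⟩
    exact ⟨hends, hends⟩
  obtain rfl : w = a := by_contra fun haw =>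
    hpair (IsMorseSimplexM.pair hvw hef hea hfb (Ne.symm haw))
  obtain rfl : v = b := by_contra fun hbv => hpair (Finset.pair_comm (w, f) (v, e) ▸
    IsMorseSimplexM.pair hvw.symm (Ne.symm hef) hfb hea (Ne.symm hbv))
  exact ⟨hea, hfb.trans Sym2.eq_swap⟩

/-- `{(v, e')}` lies in the link of `(w, f)` but not in that of `(v, e)`. -/
theorem lkv_ne_of_ends_eq {u v w : V} {e f e' : E} (he : G.ends e = s(v, w))
    (hf : G.ends f = s(v, w)) (he' : G.ends e' = s(v, u)) (huw : u ≠ w) :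
    lkv (MCpxM G) (v, e) ≠ lkv (MCpxM G) (w, f) := by
  intro hlk
  have hvw : v ≠ w := ne_of_ends_eq he
  have he'f : e' ≠ f := fun h => huw (Sym2.congr_right.mp (he'.symm.trans (h ▸ hf)))
  have hmem : {(v, e')} ∈ lkv (MCpxM G) (w, f) :=
    ⟨by simp [hvw.symm], Finset.pair_comm (v, e') (w, f) ▸
      IsMorseSimplexM.pair hvw he'f he' (hf.trans Sym2.eq_swap) huw⟩
  rw [← hlk] at hmem
  obtain ⟨hnot, hS⟩ := hmem
  have := hS.2.1 (v, e) (Finset.mem_insert_self _ _) (v, e')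
    (Finset.mem_insert_of_mem (Finset.mem_singleton_self _)) rfl
  exact hnot (this ▸ Finset.mem_singleton_self _)

theorem Connected.rrel_iff [Fintype V] (hc : G.Connected) (h3 : 3 ≤ Fintype.card V)
    {p q : V × E} (hp : p.1 ∈ G.ends p.2) (hq : q.1 ∈ G.ends q.2) :
    Rrel (MCpxM G) p q ↔ p.1 = q.1 ∧ G.ends p.2 = G.ends q.2 := by
  obtain ⟨v, e⟩ := p
  obtain ⟨w, f⟩ := q
  refine ⟨fun hR => ?_, by rintro ⟨rfl, h⟩; exact rrel_of_ends_eq h⟩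
  rcases hR with heq | ⟨hpair, hlk⟩
  · obtain ⟨rfl, rfl⟩ := Prod.mk.inj heq
    exact ⟨rfl, rfl⟩
  by_cases hvw : v = w
  · subst hvw
    exact ⟨rfl, ends_eq_of_lkv_eq hp hq hlk⟩
  obtain ⟨he, hf⟩ := ends_eq_of_pair_notMem hvw hp hq hpair
  -- an edge from `{v, w}` to a third vertex separates the links
  obtain ⟨y, hyv, hyw⟩ := Fintype.exists_ne_ne_of_three_le_card h3 v w
  obtain ⟨a, ha, u, hu, -, e', he'⟩ := hc.exists_adj_of_mem_of_notMem (S := {v, w}) (y := y)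
    (Set.mem_insert v _) (by simp [hyv, hyw])
  simp only [Set.mem_insert_iff, Set.mem_singleton_iff, not_or] at ha hu
  rcases ha with rfl | rfl
  · exact (lkv_ne_of_ends_eq he hf he' hu.2 hlk).elim
  · exact (lkv_ne_of_ends_eq (hf.trans Sym2.eq_swap) (he.trans Sym2.eq_swap) he' hu.1
      hlk.symm).elim

theorem Connected.orient_eq_of_rrel [Fintype V] [Nonempty V] (hc : G.Connected)
    (h3 : 3 ≤ Fintype.card V) {p q : V × E} (h : Rrel (MCpxM G) p q) :
    G.orient p = G.orient q := by
  by_cases hp : p.1 ∈ G.ends p.2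
  · have hq := mem_ends_of_rrel h hp
    exact (orient_eq_orient_iff hp hq).mpr ((hc.rrel_iff h3 hp hq).mp h)
  · have hq : q.1 ∉ G.ends q.2 := fun hq => hp (mem_ends_of_rrel h.symm hq)
    rw [orient_of_notMem hp, orient_of_notMem hq]

theorem rrel_of_orient_eq [Nonempty V] {p q : V × E} (hp : p.1 ∈ G.ends p.2)
    (hq : q.1 ∈ G.ends q.2) (h : G.orient p = G.orient q) : Rrel (MCpxM G) p q := by
  obtain ⟨v, e⟩ := p
  obtain ⟨w, f⟩ := q
  obtain ⟨rfl, hef⟩ := (orient_eq_orient_iff hp hq).mp h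
  exact rrel_of_ends_eq hef

end Multigraph

theorem stmt_12_general {V E : Type*} [Fintype V] [DecidableEq V] [DecidableEq E]
    (G : Multigraph V E) (hc : G.Connected) (h3 : 3 ≤ Fintype.card V) :
    ∃ g : Quot (Rrel (MCpxM G)) → V × V,
      (∀ (v w : V) (e : E), G.ends e = s(v, w) →
        g (Quot.mk (Rrel (MCpxM G)) (v, e)) = (v, w)) ∧
      Set.InjOn g {x | ∃ p : V × E, p.1 ∈ G.ends p.2 ∧ Quot.mk (Rrel (MCpxM G)) p = x} ∧
      (∀ t : Finset (Quot (Rrel (MCpxM G))),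
        t ∈ qfaces (MCpxM G) ↔
          ∃ u : Finset (V × V), IsMorseSimplex G.toSimple u ∧
            ∀ p : V × V, p ∈ u ↔ ∃ x ∈ t, g x = p) := by
  have : Nonempty V := Fintype.card_pos_iff.mp (by omega)
  set g := Quot.lift G.orient fun _ _ => hc.orient_eq_of_rrel h3
  have hinj : Set.InjOn g {x | ∃ p : V × E, p.1 ∈ G.ends p.2 ∧ Quot.mk _ p = x} := by
    rintro _ ⟨p, hp, rfl⟩ _ ⟨q, hq, rfl⟩ hpq
    exact Quot.sound (Multigraph.rrel_of_orient_eq hp hq hpq)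
  refine ⟨g, fun v w e he => Multigraph.orient_of_ends_eq he, hinj,
    mem_qfaces_iff (L := {u | IsMorseSimplex G.toSimple u})
      (fun s hs => Multigraph.isMorseSimplex_image_orient hs)
      (fun u hu => Multigraph.exists_isMorseSimplexM_image_orient_eq hu) fun u hu => ?_⟩
  refine hinj.mono fun x hx => ?_
  obtain ⟨p, rfl⟩ := Quot.exists_rep x
  exact ⟨p, Multigraph.mem_ends_of_toSimple_adj_orient (hu.1 _ hx), rfl⟩

/-- For a finite connected multigraph `G` with at least three vertices, the quotient of
`𝔐(G)` by `ℛ` is isomorphic to `𝔐(sG)`, via the map sending the class of `(v, e)` to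
the oriented edge `(v, w)` of `sG`, where `w` is the other endpoint of `e`. -/
theorem stmt_12 {V E : Type*} [Fintype V] [DecidableEq V] [Fintype E] [DecidableEq E]
    (G : Multigraph V E) (hc : G.Connected) (h3 : 3 ≤ Fintype.card V) :
    ∃ g : Quot (Rrel (MCpxM G)) → V × V,
      (∀ (v w : V) (e : E), G.ends e = s(v, w) →
        g (Quot.mk (Rrel (MCpxM G)) (v, e)) = (v, w)) ∧
      Set.InjOn g {x | ∃ p : V × E, p.1 ∈ G.ends p.2 ∧ Quot.mk (Rrel (MCpxM G)) p = x} ∧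
      (∀ t : Finset (Quot (Rrel (MCpxM G))),
        t ∈ qfaces (MCpxM G) ↔
          ∃ u : Finset (V × V), IsMorseSimplex G.toSimple u ∧
            ∀ p : V × V, p ∈ u ↔ ∃ x ∈ t, g x = p) :=
  stmt_12_general G hc h3
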